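/- Normal-form preservation of the read-back rewriting system: for every normal context C[·] and lambda terms M, N, if ⟨C[·], M•⟩ →* ⌈N⌉ (the reduction sequence in Λ^rb starting from ⟨C[·], M•⟩ terminates in the atom ⌈N⌉), then N is in β-normal form. -/

import Mathlib

/-- Lambda terms, extended with "atoms" `⌈M⌉` that wrap a term. -/
inductive Tm : Type
  | var : String → Tm
  | app : Tm → Tm → Tm
  | lam : String → Tm → Tm
  | atom : Tm → Tm
deriving DecidableEq

namespace Tm

/-- A pure lambda term (an element of Λ): contains no atoms. -/
def Pure : Tm → Prop
  | var _ => True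
  | app a b => Pure a ∧ Pure b
  | lam _ m => Pure m
  | atom _ => False

/-- Free variables; atoms have no free variables. -/
def FV : Tm → Finset String
  | var x => {x}
  | app a b => FV a ∪ FV b
  | lam x m => FV m \ {x}
  | atom _ => ∅

/-- Substitution; atoms are unaffected. -/
def subst : Tm → String → Tm → Tm
  | var y, x, N => if y = x then N else var y
  | app a b, x, N => app (a.subst x N) (b.subst x N)
  | lam y m, x, N => if y = x then lam y m else lam y (m.subst x N)
  | atom m, _, _ => atom m

/-- `apps M [N₁,…,Nₙ] = M N₁ ⋯ Nₙ`. -/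
def apps (M : Tm) (Ns : List Tm) : Tm := Ns.foldl app M

/-- Replace each free variable `x` (not in the bound list) by the atom `⌈x⌉`. -/
def bulletAux : List String → Tm → Tm
  | bs, var x => if x ∈ bs then var x else atom (var x)
  | bs, app a b => app (bulletAux bs a) (bulletAux bs b)
  | bs, lam x m => lam x (bulletAux (x :: bs) m)
  | _, atom m => atom m

/-- `M•`: replace each free variable `x` of `M` by the atom `⌈x⌉`. -/
def bullet (M : Tm) : Tm := bulletAux [] M

/-- Read-back `RB : Λ• → Λ`: `RB (M N) = RB M (RB N)`,
`RB (λx.M) = λx.RB (M[x:=⌈x⌉])`, `RB ⌈M⌉ = M` (stated structurally,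
which agrees with the above since `RB (M[x:=⌈x⌉]) = RB M` here). -/
def RB : Tm → Tm
  | var x => var x
  | app a b => app (RB a) (RB b)
  | lam x m => lam x (RB m)
  | atom m => m

end Tm

/-- Membership in Λ• = { M• | M ∈ Λ }. -/
def IsBullet (M : Tm) : Prop := ∃ P : Tm, P.Pure ∧ M = P.bullet

/-- One-step β-reduction (atoms are inert). -/
inductive Beta : Tm → Tm → Prop
  | beta (x M N) : Beta (.app (.lam x M) N) (M.subst x N)
  | appL {M M'} (N) : Beta M M' → Beta (.app M N) (.app M' N)
  | appR (M) {N N'} : Beta N N' → Beta (.app M N) (.app M N')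
  | lam (x) {M M'} : Beta M M' → Beta (.lam x M) (.lam x M')

/-- β-normal form. -/
def NF (M : Tm) : Prop := ∀ N, ¬ Beta M N

/-- One-hole contexts. -/
inductive Ctx : Type
  | hole
  | appL : Ctx → Tm → Ctx
  | appR : Tm → Ctx → Ctx
  | lam : String → Ctx → Ctx

namespace Ctx

/-- `C[M]`: fill the hole of `C` with `M`. -/
def fill : Ctx → Tm → Tm
  | hole, M => M
  | appL C N, M => .app (C.fill M) N
  | appR N C, M => .app N (C.fill M)
  | lam x C, M => .lam x (C.fill M)

/-- Composition of contexts: `(C.comp D)[M] = C[D[M]]`. -/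
def comp : Ctx → Ctx → Ctx
  | hole, D => D
  | appL C N, D => appL (C.comp D) N
  | appR N C, D => appR N (C.comp D)
  | lam x C, D => lam x (C.comp D)

/-- A context over pure lambda terms. -/
def Pure : Ctx → Prop
  | hole => True
  | appL C N => C.Pure ∧ N.Pure
  | appR N C => N.Pure ∧ C.Pure
  | lam _ C => C.Pure

end Ctx

/-- A context is normal iff it maps β-normal forms to β-normal forms. -/
def NormalCtx (C : Ctx) : Prop := ∀ M, NF M → NF (C.fill M)

/-- The set Λ^rb: atoms `⌈M⌉`; pairs `⟨C[·], M⟩` with `M ∈ Λ•`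
(applications `M ⃗N` with head in `Λ•` are encoded inside the `Tm`);
and `⟨C[·], M ⃗N⟩` with `M ∈ Λ^rb`, `⃗N ∈ Λ•`. -/
inductive Rb : Type
  | atom : Tm → Rb
  | pair : Ctx → Tm → Rb
  | papp : Ctx → Rb → List Tm → Rb

namespace Rb

/-- Well-formedness: side conditions of membership in Λ^rb. -/
def WF : Rb → Prop
  | atom M => M.Pure
  | pair C M => C.Pure ∧ IsBullet M
  | papp C M Ns => C.Pure ∧ M.WF ∧ ∀ N ∈ Ns, IsBullet N

/-- Read-back on Λ^rb. -/
def rb : Rb → Tm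
  | atom M => M
  | pair C M => C.fill M.RB
  | papp C M Ns => C.fill (Tm.apps M.rb (Ns.map Tm.RB))

end Rb

/-- The reduction relation on Λ^rb (Definition 4 of the paper). -/
inductive Step : Rb → Rb → Prop
  | collapse (C M) : Step (.pair C (.atom M)) (.atom (C.fill M))
  | lam (C x M) :
      Step (.pair C (.lam x M))
        (.pair (C.comp (.lam x .hole)) (M.subst x (.atom (.var x))))
  | split (C M N₀ Ns) :
      Step (.pair C (Tm.apps (.atom M) (N₀ :: Ns)))
        (.papp C (.pair (.appR M .hole) N₀) Ns)
  | beta (C x M N₀ Ns) :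
      Step (.pair C (Tm.apps (.lam x M) (N₀ :: Ns)))
        (.pair C (Tm.apps (M.subst x N₀) Ns))
  | collapseNil (C M) : Step (.papp C (.atom M) []) (.atom (C.fill M))
  | splitCons (C M N₀ Ns) :
      Step (.papp C (.atom M) (N₀ :: Ns)) (.papp C (.pair (.appR M .hole) N₀) Ns)
  | cong (C Ns) {M M'} : Step M M' → Step (.papp C M Ns) (.papp C M' Ns)

/-- The steps of `Step` that contract a β-redex (rule 4, possibly under head congruence). -/
inductive BStep : Rb → Rb → Prop
  | beta (C x M N₀ Ns) :
      BStep (.pair C (Tm.apps (.lam x M) (N₀ :: Ns)))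
        (.pair C (Tm.apps (M.subst x N₀) Ns))
  | cong (C Ns) {M M'} : BStep M M' → BStep (.papp C M Ns) (.papp C M' Ns)

/-- Contraction of the leftmost β-redex. -/
inductive Leftmost : Tm → Tm → Prop
  | beta (x M N) : Leftmost (.app (.lam x M) N) (M.subst x N)
  | lam (x) {M M'} : Leftmost M M' → Leftmost (.lam x M) (.lam x M')
  | appL {M M'} (N) : (∀ x M₀, M ≠ Tm.lam x M₀) → Leftmost M M' →
      Leftmost (.app M N) (.app M' N)
  | appR (M) {N N'} : NF M → (∀ x M₀, M ≠ Tm.lam x M₀) → Leftmost N N' →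
      Leftmost (.app M N) (.app M N')

/-!
Along a reduction, keep track of three facts: every atom `⌈p⌉` inside the term of a pair wraps
a neutral normal form (a β-normal non-abstraction); the context of a pair sends normal forms
to the kind of term its position demands; and head positions demand neutral normal forms.
The atoms of `M•` are variables, substitution and β-steps only move atoms around, and splitting
`⌈P⌉ N₀ ⃗N` places the neutral `P` in the context `P [·]`, which sends normal forms to neutral
normal forms. So the final atom `⌈C[t]⌉` has a normal `t`, and `C[t]` is normal.
-/

namespace Tm

def IsLam : Tm → Prop
  | lam _ _ => True
  | _ => False

def AllAtoms (S : Tm → Prop) : Tm → Prop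
  | var _ => True
  | app a b => AllAtoms S a ∧ AllAtoms S b
  | lam _ m => AllAtoms S m
  | atom p => S p

variable {S : Tm → Prop}

theorem AllAtoms.subst {M N : Tm} (hM : M.AllAtoms S) (hN : N.AllAtoms S) (x : String) :
    (M.subst x N).AllAtoms S := by
  induction M with
  | var y => unfold Tm.subst; split <;> trivial
  | app a b iha ihb => exact ⟨iha hM.1, ihb hM.2⟩
  | lam y m ih => unfold Tm.subst; split; exacts [hM, ih hM]
  | atom m => exact hM

theorem allAtoms_apps_iff (M : Tm) (Ns : List Tm) :
    (M.apps Ns).AllAtoms S ↔ M.AllAtoms S ∧ ∀ N ∈ Ns, N.AllAtoms S := by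
  induction Ns generalizing M with
  | nil => simp [Tm.apps]
  | cons N Ns ih =>
    rw [show M.apps (N :: Ns) = (M.app N).apps Ns from rfl, ih]
    simp only [AllAtoms, List.forall_mem_cons, and_assoc]

theorem allAtoms_bulletAux (hS : ∀ x, S (var x)) {M : Tm} (hM : M.Pure) (bs : List String) :
    (M.bulletAux bs).AllAtoms S := by
  induction M generalizing bs with
  | var x => unfold Tm.bulletAux; split; exacts [trivial, hS x]
  | app a b iha ihb => exact ⟨iha hM.1 bs, ihb hM.2 bs⟩
  | lam x m ih => exact ih hM _
  | atom m => exact hM.elim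

end Tm

theorem Ctx.fill_comp (C D : Ctx) (t : Tm) : (C.comp D).fill t = C.fill (D.fill t) := by
  induction C <;> simp [Ctx.comp, Ctx.fill, *]

def NeutralNF (t : Tm) : Prop := NF t ∧ ¬ t.IsLam

theorem NF.lam {t : Tm} (ht : NF t) (x : String) : NF (.lam x t) := by
  rintro _ (_ | _ | _ | ⟨_, h⟩)
  exact ht _ h

theorem NeutralNF.app {P t : Tm} (hP : NeutralNF P) (ht : NF t) : NeutralNF (.app P t) := by
  refine ⟨?_, id⟩
  rintro _ (_ | ⟨_, h⟩ | ⟨_, h⟩)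
  · exact hP.2 trivial
  · exact hP.1 _ h
  · exact ht _ h

theorem neutralNF_var (x : String) : NeutralNF (.var x) :=
  ⟨fun _ h => (nomatch h), id⟩

namespace Rb

open Tm

/-- An invariant of `Step` ensuring that every atom reachable from `r` wraps a term
satisfying `P`. -/
def Guarantees : (Tm → Prop) → Rb → Prop
  | P, atom M => P M
  | P, pair C M => (∀ t, NF t → P (C.fill t)) ∧ M.AllAtoms NeutralNF
  | P, papp C r Ns =>
      r.Guarantees NeutralNF ∧ (∀ t, NeutralNF t → P (C.fill t)) ∧
        ∀ N ∈ Ns, N.AllAtoms NeutralNF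

theorem guarantees_appR_pair {P N : Tm} (hP : NeutralNF P) (hN : N.AllAtoms NeutralNF) :
    (pair (.appR P .hole) N).Guarantees NeutralNF :=
  ⟨fun _ ht => hP.app ht, hN⟩

theorem Guarantees.of_step {r r' : Rb} (h : Step r r') {P : Tm → Prop}
    (hr : r.Guarantees P) : r'.Guarantees P := by
  induction h generalizing P with
  | collapse C M => exact hr.1 M hr.2.1
  | lam C x M =>
    have hx : (Tm.atom (.var x)).AllAtoms NeutralNF := neutralNF_var x
    refine ⟨fun t ht => ?_, AllAtoms.subst (M := M) hr.2 hx x⟩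
    simpa only [Ctx.fill_comp, Ctx.fill] using hr.1 _ (ht.lam x)
  | split C M N₀ Ns =>
    obtain ⟨hC, hatoms⟩ := hr
    simp only [allAtoms_apps_iff, List.forall_mem_cons, AllAtoms] at hatoms
    obtain ⟨hM, hN₀, hNs⟩ := hatoms
    exact ⟨guarantees_appR_pair hM hN₀, fun t ht => hC t ht.1, hNs⟩
  | beta C x M N₀ Ns =>
    obtain ⟨hC, hatoms⟩ := hr
    simp only [allAtoms_apps_iff, List.forall_mem_cons, AllAtoms] at hatoms
    obtain ⟨hM, hN₀, hNs⟩ := hatoms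
    exact ⟨hC, (allAtoms_apps_iff _ _).2 ⟨hM.subst hN₀ x, hNs⟩⟩
  | collapseNil C M => exact hr.2.1 M hr.1
  | splitCons C M N₀ Ns =>
    obtain ⟨hM, hC, hN₀, hNs⟩ := hr.1, hr.2.1, List.forall_mem_cons.1 hr.2.2
    exact ⟨guarantees_appR_pair hM hN₀, hC, hNs⟩
  | cong C Ns _ ih => exact ⟨ih hr.1, hr.2⟩

theorem Guarantees.of_reflTransGen {r r' : Rb} (h : Relation.ReflTransGen Step r r')
    {P : Tm → Prop} (hr : r.Guarantees P) : r'.Guarantees P := by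
  induction h with
  | refl => exact hr
  | tail _ step ih => exact ih.of_step step

end Rb

theorem rb_reaches_normal_general (C : Ctx) (M N : Tm) (hC : NormalCtx C)
    (hM : M.Pure)
    (h : Relation.ReflTransGen Step (Rb.pair C M.bullet) (Rb.atom N)) :
    NF N :=
  Rb.Guarantees.of_reflTransGen h (P := NF) ⟨hC, Tm.allAtoms_bulletAux neutralNF_var hM []⟩

/-- If `⟨C[·], M•⟩ →* ⌈N⌉` with `C` a normal context, then `N` is β-normal. -/
theorem rb_reaches_normal (C : Ctx) (M N : Tm) (hC : NormalCtx C) (hCp : C.Pure)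
    (hM : M.Pure)
    (h : Relation.ReflTransGen Step (Rb.pair C M.bullet) (Rb.atom N)) :
    NF N :=
  rb_reaches_normal_general C M N hC hM h
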